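/- Let f, g be nonzero polynomials over a principal ideal ring R with leading coefficients c_f, c_g and leading monomials m_f, m_g, and let c = d_f·c_f + d_g·c_g be a generator of the ideal (c_f, c_g). Then the gcd-polynomial gpoly(f,g) = (d_f·lcm(m_f,m_g)/m_f)·f + (d_g·lcm(m_f,m_g)/m_g)·g has leading term c·lcm(m_f,m_g), provided c·lcm(m_f,m_g) ≠ 0. -/

import Mathlib

open MvPolynomial

/-- The leading monomial (exponent vector) of `f` with respect to the monomial order `m`. -/
noncomputable def MonomialOrder.lm {σ R : Type*} [CommSemiring R] (m : MonomialOrder σ)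
    (f : MvPolynomial σ R) : σ →₀ ℕ :=
  m.toSyn.symm (f.support.sup fun d => m.toSyn d)

/-- The leading coefficient of `f` with respect to `m`. -/
noncomputable def MonomialOrder.lc {σ R : Type*} [CommSemiring R] (m : MonomialOrder σ)
    (f : MvPolynomial σ R) : R :=
  f.coeff (m.lm f)

/-- The leading term of `f` with respect to `m`. -/
noncomputable def MonomialOrder.lt {σ R : Type*} [CommSemiring R] (m : MonomialOrder σ)
    (f : MvPolynomial σ R) : MvPolynomial σ R :=
  monomial (m.lm f) (m.lc f)

lemma toSyn_lm {σ R : Type*} [CommSemiring R] (m : MonomialOrder σ)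
    (f : MvPolynomial σ R) : m.toSyn (m.lm f) = f.support.sup fun d => m.toSyn d := by
  simp [MonomialOrder.lm]

lemma mem_support_le {σ R : Type*} [CommSemiring R] (m : MonomialOrder σ)
    {f : MvPolynomial σ R} {d : σ →₀ ℕ} (hd : d ∈ f.support) :
    m.toSyn d ≤ m.toSyn (m.lm f) := by
  rw [toSyn_lm]
  exact Finset.le_sup hd

/-- The gcd-polynomial of `f` and `g` has leading term `c · lcm(m_f, m_g)`,
provided this term is nonzero. -/
theorem gpoly_leading_term {σ R : Type*} [CommRing R]
    (m : MonomialOrder σ) (f g : MvPolynomial σ R) (hf : f ≠ 0) (hg : g ≠ 0)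
    (c df dg : R)
    (hgen : Ideal.span {m.lc f, m.lc g} = Ideal.span {c})
    (hc : c = df * m.lc f + dg * m.lc g)
    (gpoly : MvPolynomial σ R)
    (hgpoly : gpoly = monomial ((m.lm f ⊔ m.lm g) - m.lm f) df * f
        + monomial ((m.lm f ⊔ m.lm g) - m.lm g) dg * g)
    (hne : (monomial (m.lm f ⊔ m.lm g) c : MvPolynomial σ R) ≠ 0) :
    m.lt gpoly = monomial (m.lm f ⊔ m.lm g) c := by
  classical
  set L : σ →₀ ℕ := m.lm f ⊔ m.lm g with hL
  have hcne : c ≠ 0 := by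
    intro h
    exact hne (by rw [h, map_zero])
  have hfL : m.lm f ≤ L := le_sup_left
  have hgL : m.lm g ≤ L := le_sup_right
  -- coefficient of gpoly at L is c
  have hcoeff : gpoly.coeff L = c := by
    rw [hgpoly, coeff_add, coeff_monomial_mul', coeff_monomial_mul',
      if_pos (tsub_le_self), if_pos (tsub_le_self),
      tsub_tsub_cancel_of_le hfL, tsub_tsub_cancel_of_le hgL, hc]
    rfl
  -- all monomials of gpoly are ≤ L
  have hbound : ∀ d ∈ gpoly.support, m.toSyn d ≤ m.toSyn L := by
    intro d hd
    rw [hgpoly] at hd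
    have hd' := MvPolynomial.support_add hd
    have key : ∀ (p : MvPolynomial σ R) (a : σ →₀ ℕ) (r : R), a + m.lm p = L →
        d ∈ (monomial a r * p).support → m.toSyn d ≤ m.toSyn L := by
      intro p a r ha hd
      rw [mem_support_iff, coeff_monomial_mul'] at hd
      split_ifs at hd with h
      · have h2 : d - a ∈ p.support := by
          rw [mem_support_iff]
          intro h0
          exact hd (by rw [h0, mul_zero])
        have h3 := mem_support_le m h2
        calc m.toSyn d = m.toSyn (a + (d - a)) := by rw [add_tsub_cancel_of_le h]
          _ = m.toSyn a + m.toSyn (d - a) := map_add _ _ _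
          _ ≤ m.toSyn a + m.toSyn (m.lm p) := by
              exact add_le_add le_rfl h3
          _ = m.toSyn (a + m.lm p) := (map_add _ _ _).symm
          _ = m.toSyn L := by rw [ha]
      · exact absurd rfl hd
    rcases Finset.mem_union.mp hd' with h | h
    · exact key f _ df (tsub_add_cancel_of_le hfL) h
    · exact key g _ dg (tsub_add_cancel_of_le hgL) h
  have hLmem : L ∈ gpoly.support := by
    rw [mem_support_iff, hcoeff]; exact hcne
  have hlm : m.lm gpoly = L := by
    have : (gpoly.support.sup fun d => m.toSyn d) = m.toSyn L :=
      le_antisymm (Finset.sup_le hbound) (Finset.le_sup hLmem)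
    rw [MonomialOrder.lm, this, AddEquiv.symm_apply_apply]
  rw [MonomialOrder.lt, hlm, MonomialOrder.lc, hlm, hcoeff]
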